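/- arXiv:1608.04196 — 2 statements merged into one kernel-verified Lean document; each statement's English description precedes it below -/
import Mathlib

section
/- For every positive integer N there exist a real number X₀ and a constant c > 0 (depending only on N) such that for all X ≥ X₀, the interval (X, X + c·X^{1/4}) contains an integer n that is a sum of two squares and coprime to N. -/
set_option maxHeartbeats 1000000


/-- (Das–Ganguly) For every positive integer `N` there are `X₀ ∈ ℝ` and `c > 0`, depending
only on `N`, such that for all `X ≥ X₀` the interval `(X, X + c·X^{1/4})` contains an integer
which is a sum of two squares and coprime to `N`. -/
theorem sum_two_squares_coprime_in_short_interval (N : ℕ) (hN : 0 < N) :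
    ∃ (X₀ : ℝ) (c : ℝ), 0 < c ∧ ∀ X : ℝ, X₀ ≤ X →
      ∃ n : ℕ, X < (n : ℝ) ∧ (n : ℝ) < X + c * X ^ ((1 : ℝ) / 4) ∧
        (∃ a b : ℤ, (n : ℤ) = a ^ 2 + b ^ 2) ∧ Nat.Coprime n N := by
  have hN' : (0:ℝ) < N := by exact_mod_cast hN
  refine ⟨1, 2*(N+1)*Real.sqrt (2*N) + ((N:ℝ)+1)^2 + 1, by positivity, ?_⟩
  intro X hX
  have hX0 : (0:ℝ) ≤ X := by linarith
  set s := Real.sqrt X with hs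
  have hs0 : 0 ≤ s := Real.sqrt_nonneg X
  have hs2 : s^2 = X := Real.sq_sqrt hX0
  set a : ℕ := N * ⌊s / N⌋₊ with ha
  have haR : (a:ℝ) = N * ⌊s / N⌋₊ := by push_cast [ha]; ring
  have hfl : (⌊s / N⌋₊ : ℝ) ≤ s / N := Nat.floor_le (by positivity)
  have hfl' : s / N < ⌊s / N⌋₊ + 1 := Nat.lt_floor_add_one _
  have hale : (a:ℝ) ≤ s := by
    rw [haR]
    have := (le_div_iff₀ hN').mp hfl
    linarith
  have halt : s < a + N := by
    rw [haR]
    have := (div_lt_iff₀ hN').mp hfl'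
    nlinarith
  set d := X - (a:ℝ)^2 with hd
  have hd0 : 0 ≤ d := by nlinarith
  have hdle : d ≤ 2*N*s := by nlinarith
  set t := Real.sqrt d with ht
  have ht0 : 0 ≤ t := Real.sqrt_nonneg d
  have ht2 : t^2 = d := Real.sq_sqrt hd0
  have hq : Real.sqrt s = X ^ ((1:ℝ)/4) := by
    rw [hs, Real.sqrt_eq_rpow, Real.sqrt_eq_rpow, ← Real.rpow_mul hX0]
    norm_num
  have hq0 : 0 ≤ X ^ ((1:ℝ)/4) := by rw [← hq]; exact Real.sqrt_nonneg _
  have hq1 : (1:ℝ) ≤ X ^ ((1:ℝ)/4) := Real.one_le_rpow hX (by norm_num)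
  have htle : t ≤ Real.sqrt (2*N) * X ^ ((1:ℝ)/4) := by
    rw [ht, ← hq, ← Real.sqrt_mul (by positivity)]
    exact Real.sqrt_le_sqrt hdle
  set b : ℕ := N * ⌊t/N⌋₊ + N + 1 with hb
  have hbR : (b:ℝ) = N * ⌊t/N⌋₊ + N + 1 := by push_cast [hb]; ring
  have hfl2 : (⌊t / N⌋₊ : ℝ) ≤ t / N := Nat.floor_le (by positivity)
  have hfl2' : t / N < ⌊t / N⌋₊ + 1 := Nat.lt_floor_add_one _
  have hbgt : t < b := by
    rw [hbR]
    have := (div_lt_iff₀ hN').mp hfl2'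
    nlinarith
  have hble : (b:ℝ) ≤ t + N + 1 := by
    rw [hbR]
    have := (le_div_iff₀ hN').mp hfl2
    linarith
  have hcop : Nat.Coprime (a^2 + b^2) N := by
    have : a^2 + b^2 = 1 + N * (N * ⌊s/N⌋₊^2 + N * (⌊t/N⌋₊ + 1)^2 + 2 * (⌊t/N⌋₊ + 1)) := by
      rw [ha, hb]; ring
    rw [this]
    exact (Nat.coprime_add_mul_left_left 1 N _).mpr (Nat.coprime_one_left N)
  clear_value s a d t b
  clear ha hb hfl hfl' hfl2 hfl2'
  refine ⟨a^2 + b^2, ?_, ?_, ⟨a, b, by push_cast; ring⟩, hcop⟩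
  · have hsq : d < (b:ℝ)^2 := by nlinarith
    push_cast
    linarith [hd, hsq]
  · push_cast
    have h1 : (b:ℝ)^2 ≤ (t + N + 1)^2 := by nlinarith
    have h2 : (a:ℝ)^2 + (b:ℝ)^2 ≤ X + 2*(N+1)*t + ((N:ℝ)+1)^2 := by nlinarith
    have h3 : 2*((N:ℝ)+1)*t ≤ 2*(N+1)*Real.sqrt (2*N) * X ^ ((1:ℝ)/4) := by nlinarith
    nlinarith
end

section
/- Let a : ℕ → ℂ be a multiplicative function satisfying, for each prime q, the recurrence a(q^r) = a(q)a(q^{r-1}) − q·a(q^{r-2}) for r ≥ 2 with a(1) = 1. Assume a(p) ≠ 0 implies a(p^r) ≠ 0 for all r ≥ 1, and assume a(p) ≠ 0 for all primes p ≡ 1 (mod 4) with p ∤ 6. Then a(n) ≠ 0 for every n coprime to 6 that is a sum of two squares. -/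
/-!
Factor `n = ∏ p ^ kₚ`; by multiplicativity it suffices that `a (p ^ kₚ) ≠ 0`. Since `n` is
prime to `6`, every `p` is `≡ 1` or `≡ 3 (mod 4)`. If `a p ≠ 0` (in particular for `p ≡ 1`)
the hypothesis on powers applies. Otherwise `p ≡ 3 (mod 4)`, where `kₚ` is even because `n` is a
sum of two squares, and with `a p = 0` the Hecke recurrence collapses to
`a (p ^ (2 s)) = (-p) ^ s ≠ 0`.
-/

theorem Nat.ne_zero_of_prime_pow_factorization_ne_zero {R : Type*} [CommMonoidWithZero R]
    [NoZeroDivisors R] [Nontrivial R] {f : ℕ → R} (hf1 : f 1 = 1)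
    (hmul : ∀ m n : ℕ, m.Coprime n → f (m * n) = f m * f n) {n : ℕ} (hn : n ≠ 0)
    (h : ∀ p ∈ n.primeFactors, f (p ^ n.factorization p) ≠ 0) : f n ≠ 0 := by
  rw [Nat.multiplicative_factorization f hmul hf1 hn, Finsupp.prod, Nat.support_factorization]
  exact Finset.prod_ne_zero_iff.mpr h

theorem Nat.even_factorization_of_eq_sq_add_sq {n : ℕ} (hn : ∃ x y : ℤ, (n : ℤ) = x ^ 2 + y ^ 2)
    {q : ℕ} (hq : q ∈ n.primeFactors) (hq3 : q % 4 = 3) : Even (n.factorization q) := by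
  obtain ⟨x, y, hxy⟩ := hn
  have hnat : n = x.natAbs ^ 2 + y.natAbs ^ 2 := by
    zify
    simpa only [sq_abs] using hxy
  rw [Nat.factorization_def n (Nat.prime_of_mem_primeFactors hq)]
  exact Nat.eq_sq_add_sq_iff.mp ⟨_, _, hnat⟩ q hq hq3

theorem hecke_pow_two_mul_of_eq_zero {R : Type*} [CommRing R] {a : ℕ → R} (h1 : a 1 = 1)
    {q : ℕ} (hrec : ∀ r : ℕ, 2 ≤ r → a (q ^ r) = a q * a (q ^ (r - 1)) - (q : R) * a (q ^ (r - 2)))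
    (h0 : a q = 0) (s : ℕ) : a (q ^ (2 * s)) = (-(q : R)) ^ s := by
  induction s with
  | zero => simpa using h1
  | succ s ih =>
    rw [hrec (2 * (s + 1)) (by omega), h0, show 2 * (s + 1) - 2 = 2 * s by omega, ih]
    ring

/-- Abstract key step of the main theorem. Let `a : ℕ → ℂ` be multiplicative with `a 1 = 1`,
satisfying the weight-2 Hecke recurrence `a (q^r) = a q · a (q^(r-1)) − q · a (q^(r-2))` at
every prime `q`. If `a p ≠ 0` implies `a (p^r) ≠ 0` for all `r ≥ 1`, and `a p ≠ 0` for all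
primes `p ≡ 1 (mod 4)` with `p ∤ 6`, then `a n ≠ 0` for every `n` coprime to `6` that is a sum
of two squares. -/
theorem multiplicative_hecke_nonvanishing (a : ℕ → ℂ)
    (h1 : a 1 = 1)
    (hmul : ∀ m n : ℕ, Nat.Coprime m n → a (m * n) = a m * a n)
    (hrec : ∀ q : ℕ, q.Prime → ∀ r : ℕ, 2 ≤ r →
      a (q ^ r) = a q * a (q ^ (r - 1)) - (q : ℂ) * a (q ^ (r - 2)))
    (hpow : ∀ p : ℕ, p.Prime → a p ≠ 0 → ∀ r : ℕ, 1 ≤ r → a (p ^ r) ≠ 0)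
    (hsplit : ∀ p : ℕ, p.Prime → p % 4 = 1 → ¬ p ∣ 6 → a p ≠ 0) :
    ∀ n : ℕ, Nat.Coprime n 6 → (∃ x y : ℤ, (n : ℤ) = x ^ 2 + y ^ 2) → a n ≠ 0 := by
  intro n hn6 hsq
  have hn0 : n ≠ 0 := by
    rintro rfl
    norm_num at hn6
  refine Nat.ne_zero_of_prime_pow_factorization_ne_zero h1 hmul hn0 fun p hp => ?_
  have hpp := Nat.prime_of_mem_primeFactors hp
  have hk : 1 ≤ n.factorization p :=
    (hpp.dvd_iff_one_le_factorization hn0).mp (Nat.dvd_of_mem_primeFactors hp)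
  have hp6 : ¬ p ∣ 6 :=
    hpp.coprime_iff_not_dvd.mp (hn6.coprime_dvd_left (Nat.dvd_of_mem_primeFactors hp))
  have hp2 : p ≠ 2 := by
    rintro rfl
    exact hp6 (by norm_num)
  obtain hp1 | hp3 := Nat.odd_mod_four_iff.mp (Nat.odd_iff.mp (hpp.odd_of_ne_two hp2))
  · exact hpow p hpp (hsplit p hpp hp1 hp6) _ hk
  by_cases h0 : a p = 0
  · obtain ⟨s, hs⟩ := (Nat.even_factorization_of_eq_sq_add_sq hsq hp hp3).two_dvd
    rw [hs, hecke_pow_two_mul_of_eq_zero h1 (hrec p hpp) h0]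
    exact pow_ne_zero _ (neg_ne_zero.mpr (Nat.cast_ne_zero.mpr hpp.ne_zero))
  · exact hpow p hpp h0 _ hk
end
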